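/- arXiv:1105.2965 — 2 statements merged into one kernel-verified Lean document; each statement's English description precedes it below -/
import Mathlib

section
/- Let F ⊂ ℝ^d be a nonempty finite set and w : F → ℝ a function with w(x) > 0 for all x ∈ F (interpreted as the number of graphs with feature vector x). Define the extended feature set F̄ = {(x, log w(x)) : x ∈ F} ⊂ ℝ^{d+1} and let C̄ be its convex hull, and assume C̄ has nonempty interior in ℝ^{d+1}. Then for every θ ∈ ℝ^d, every maximizer x* of the function x ↦ ⟨θ, x⟩ + log w(x) over F satisfies that the extended point (x*, log w(x*)) lies on the frontier of C̄. In particular, a point x ∈ F whose extended point lies in the interior of C̄ cannot be a mode of the distribution P(x|θ) ∝ w(x) exp⟨θ, x⟩ for any θ ∈ ℝ^d. -/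
open scoped RealInnerProductSpace

lemma ergm_aux (d : ℕ)
    (F : Finset (EuclideanSpace ℝ (Fin d)))
    (w : EuclideanSpace ℝ (Fin d) → ℝ)
    (Cbar : Set (EuclideanSpace ℝ (Fin d) × ℝ))
    (hCbar : Cbar = convexHull ℝ
      ((fun x => (x, Real.log (w x))) '' (F : Set (EuclideanSpace ℝ (Fin d)))))
    (θ : EuclideanSpace ℝ (Fin d)) (xs : EuclideanSpace ℝ (Fin d)) (hxs : xs ∈ F)
    (hmax : ∀ x ∈ F, ⟪θ, x⟫ + Real.log (w x) ≤ ⟪θ, xs⟫ + Real.log (w xs)) :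
    (xs, Real.log (w xs)) ∈ frontier Cbar := by
  set c : ℝ := ⟪θ, xs⟫ + Real.log (w xs) with hc
  have hlin : IsLinearMap ℝ (fun p : EuclideanSpace ℝ (Fin d) × ℝ => ⟪θ, p.1⟫ + p.2) := by
    constructor
    · intro p q
      simp [inner_add_right]; ring
    · intro a p
      simp [real_inner_smul_right, smul_eq_mul, Finset.mul_sum, mul_add, mul_left_comm]
  have hsub : Cbar ⊆ {p : EuclideanSpace ℝ (Fin d) × ℝ | ⟪θ, p.1⟫ + p.2 ≤ c} := by
    rw [hCbar]
    apply convexHull_min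
    · rintro p ⟨x, hx, rfl⟩
      exact hmax x hx
    · exact convex_halfSpace_le hlin c
  have hmem : (xs, Real.log (w xs)) ∈ Cbar := by
    rw [hCbar]
    exact subset_convexHull ℝ _ ⟨xs, hxs, rfl⟩
  have hnotint : (xs, Real.log (w xs)) ∉ interior Cbar := by
    intro hint
    rcases Metric.isOpen_iff.1 isOpen_interior _ hint with ⟨ε, hε, hball⟩
    have hq : ((xs, Real.log (w xs) + ε / 2) : EuclideanSpace ℝ (Fin d) × ℝ) ∈ Cbar := by
      apply interior_subset; apply hball
      simp only [Metric.mem_ball, Prod.dist_eq, dist_self]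
      rw [max_eq_right (by positivity : dist (Real.log (w xs) + ε / 2) (Real.log (w xs)) ≥ 0)]
      rw [Real.dist_eq]
      rw [abs_of_pos (by linarith : (0:ℝ) < Real.log (w xs) + ε / 2 - Real.log (w xs))]
        <;> linarith
    have := hsub hq
    simp only [Set.mem_setOf_eq] at this
    rw [hc] at this
    linarith
  rw [frontier, Set.mem_diff]
  exact ⟨subset_closure hmem, hnotint⟩

/-- The paper's degeneracy corollary of its Theorem 1: with extended features
`F̄ = {(x, log w(x)) : x ∈ F} ⊂ ℝ^d × ℝ` whose convex hull `C̄` is full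
dimensional, every mode `x*` of `x ↦ ⟪θ, x⟫ + log w(x)` over `F` has its
extended point `(x*, log w(x*))` on the frontier of `C̄`; in particular a point
of `F` whose extended point lies in the interior of `C̄` cannot be a mode of the
ERGM `P(x|θ) ∝ w(x) exp⟪θ, x⟫` for any `θ`. -/
theorem ergm_mode_extended_point_mem_frontier (d : ℕ)
    (F : Finset (EuclideanSpace ℝ (Fin d))) (hF : F.Nonempty)
    (w : EuclideanSpace ℝ (Fin d) → ℝ) (hw : ∀ x ∈ F, 0 < w x)
    (Cbar : Set (EuclideanSpace ℝ (Fin d) × ℝ))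
    (hCbar : Cbar = convexHull ℝ
      ((fun x => (x, Real.log (w x))) '' (F : Set (EuclideanSpace ℝ (Fin d)))))
    (hfull : (interior Cbar).Nonempty) :
    (∀ (θ : EuclideanSpace ℝ (Fin d)), ∀ xs ∈ F,
        (∀ x ∈ F, ⟪θ, x⟫ + Real.log (w x) ≤ ⟪θ, xs⟫ + Real.log (w xs)) →
        (xs, Real.log (w xs)) ∈ frontier Cbar) ∧
    (∀ x ∈ F, (x, Real.log (w x)) ∈ interior Cbar →
        ∀ θ : EuclideanSpace ℝ (Fin d),
          ¬ ∀ y ∈ F, ⟪θ, y⟫ + Real.log (w y) ≤ ⟪θ, x⟫ + Real.log (w x)) := by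
  constructor
  · intro θ xs hxs hmax
    exact ergm_aux d F w Cbar hCbar θ xs hxs hmax
  · intro x hx hint θ hmax
    have hfr := ergm_aux d F w Cbar hCbar θ x hx hmax
    rw [frontier, Set.mem_diff] at hfr
    exact hfr.2 hint
end

section
/- Let F ⊂ ℝ^d be a nonempty finite set, w : F → ℝ positive on F, and let x* lie in the interior of the convex hull of F (assumed nonempty). Then the log-likelihood ℓ(θ) = ⟨θ, x*⟩ − log( Σ_{x∈F} w(x) exp⟨θ, x⟩ ) attains its supremum over ℝ^d; i.e., a maximum likelihood estimate θ̂ exists, and it satisfies Σ_{x∈F} P(x|θ̂) x = x* where P(x|θ) = w(x) exp⟨θ, x⟩ / Z(θ). -/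
/-!
Since `xs` is interior to the convex hull of `F`, the point `xs + r • θ / ‖θ‖` still lies in the
hull for some `r > 0`, so some `x ∈ F` has `⟪θ, x⟫ ≥ ⟪θ, xs⟫ + r‖θ‖`. Keeping only that term of
the partition function gives `ℓ(θ) ≤ C - r‖θ‖`, so the continuous log-likelihood tends to `-∞`
at infinity and attains its maximum. The gradient of `ℓ` at `θ` is `xs` minus the mean of
`P(·|θ)`, and it vanishes at the maximum.
-/

open scoped RealInnerProductSpace
open Filter Metric

namespace ExponentialFamily

variable {E : Type*} [NormedAddCommGroup E] [InnerProductSpace ℝ E]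

noncomputable def partition (F : Finset E) (w : E → ℝ) (θ : E) : ℝ :=
  ∑ x ∈ F, w x * Real.exp ⟪θ, x⟫

noncomputable def logLikelihood (F : Finset E) (w : E → ℝ) (xs θ : E) : ℝ :=
  ⟪θ, xs⟫ - Real.log (partition F w θ)

noncomputable def mean (F : Finset E) (w : E → ℝ) (θ : E) : E :=
  ∑ x ∈ F, (w x * Real.exp ⟪θ, x⟫ / partition F w θ) • x

variable {F : Finset E} {w : E → ℝ}

lemma weight_mul_exp_le_partition (hw : ∀ x ∈ F, 0 < w x) {x : E} (hx : x ∈ F) (θ : E) :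
    w x * Real.exp ⟪θ, x⟫ ≤ partition F w θ :=
  Finset.single_le_sum (fun y hy => (mul_pos (hw y hy) (Real.exp_pos _)).le) hx

lemma partition_pos (hF : F.Nonempty) (hw : ∀ x ∈ F, 0 < w x) (θ : E) : 0 < partition F w θ :=
  Finset.sum_pos (fun x hx => mul_pos (hw x hx) (Real.exp_pos _)) hF

lemma log_weight_add_inner_le_log_partition (hw : ∀ x ∈ F, 0 < w x) {x : E} (hx : x ∈ F)
    (θ : E) : Real.log (w x) + ⟪θ, x⟫ ≤ Real.log (partition F w θ) := by
  have hpos := mul_pos (hw x hx) (Real.exp_pos ⟪θ, x⟫)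
  calc Real.log (w x) + ⟪θ, x⟫ = Real.log (w x * Real.exp ⟪θ, x⟫) := by
        rw [Real.log_mul (hw x hx).ne' (Real.exp_pos _).ne', Real.log_exp]
    _ ≤ Real.log (partition F w θ) :=
        Real.log_le_log hpos (weight_mul_exp_le_partition hw hx θ)

lemma hasFDerivAt_inner_left_const (x θ : E) :
    HasFDerivAt (fun θ : E => ⟪θ, x⟫) (innerSL ℝ x) θ :=
  (innerSL ℝ x).hasFDerivAt.congr_of_eventuallyEq
    (Eventually.of_forall fun θ => real_inner_comm x θ)

lemma hasFDerivAt_partition (θ : E) :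
    HasFDerivAt (partition F w) (innerSL ℝ (∑ x ∈ F, (w x * Real.exp ⟪θ, x⟫) • x)) θ := by
  have hterm : ∀ x ∈ F, HasFDerivAt (fun θ => w x * Real.exp ⟪θ, x⟫)
      ((w x * Real.exp ⟪θ, x⟫) • innerSL ℝ x) θ := fun x _ => by
    simpa only [smul_smul, mul_comm] using (hasFDerivAt_inner_left_const x θ).exp.const_mul (w x)
  refine (HasFDerivAt.fun_sum hterm).congr_fderiv ?_
  simp only [map_sum, map_smul]

lemma hasFDerivAt_logLikelihood (hF : F.Nonempty) (hw : ∀ x ∈ F, 0 < w x) (xs θ : E) :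
    HasFDerivAt (logLikelihood F w xs) (innerSL ℝ (xs - mean F w θ)) θ := by
  refine ((hasFDerivAt_inner_left_const xs θ).sub
    ((hasFDerivAt_partition θ).log (partition_pos hF hw θ).ne')).congr_fderiv ?_
  have hmean : mean F w θ = (partition F w θ)⁻¹ • ∑ x ∈ F, (w x * Real.exp ⟪θ, x⟫) • x := by
    simp only [mean, Finset.smul_sum, smul_smul, div_eq_inv_mul]
  rw [hmean, map_sub, map_smul]

lemma exists_le_inner_of_closedBall_subset_convexHull {S : Set E} {xs : E} {r : ℝ}
    (hr : 0 ≤ r) (hS : closedBall xs r ⊆ convexHull ℝ S) (θ : E) :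
    ∃ x ∈ S, ⟪θ, xs⟫ + r * ‖θ‖ ≤ ⟪θ, x⟫ := by
  rcases eq_or_ne θ 0 with rfl | hθ
  · obtain ⟨x, hx⟩ := convexHull_nonempty_iff.mp ⟨xs, hS (mem_closedBall_self hr)⟩
    exact ⟨x, hx, by simp⟩
  have hθ' : ‖θ‖ ≠ 0 := norm_ne_zero_iff.mpr hθ
  set p := xs + (r / ‖θ‖) • θ
  have hp : p ∈ convexHull ℝ S := hS <| by
    rw [mem_closedBall, dist_eq_norm, add_sub_cancel_left, norm_smul, Real.norm_eq_abs,
      abs_div, abs_norm, abs_of_nonneg hr, div_mul_cancel₀ r hθ']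
  have hθp : ⟪θ, p⟫ = ⟪θ, xs⟫ + r * ‖θ‖ := by
    rw [inner_add_right, real_inner_smul_right, real_inner_self_eq_norm_sq]
    field_simp
  obtain ⟨x, hx, hle⟩ :=
    ((innerₛₗ ℝ θ).convexOn convex_univ).exists_ge_of_mem_convexHull (Set.subset_univ S) hp
  exact ⟨x, hx, hθp ▸ hle⟩

lemma continuous_logLikelihood (hF : F.Nonempty) (hw : ∀ x ∈ F, 0 < w x) (xs : E) :
    Continuous (logLikelihood F w xs) :=
  continuous_iff_continuousAt.mpr fun θ => (hasFDerivAt_logLikelihood hF hw xs θ).continuousAt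

lemma tendsto_logLikelihood_cocompact [ProperSpace E] (hF : F.Nonempty) (hw : ∀ x ∈ F, 0 < w x)
    {xs : E} (hxs : xs ∈ interior (convexHull ℝ (F : Set E))) :
    Tendsto (logLikelihood F w xs) (cocompact E) atBot := by
  obtain ⟨r, hr, hball⟩ := nhds_basis_closedBall.mem_iff.mp (mem_interior_iff_mem_nhds.mp hxs)
  obtain ⟨xm, -, hxm⟩ := F.exists_min_image (fun x => Real.log (w x)) hF
  have hbound : ∀ θ, logLikelihood F w xs θ ≤ -Real.log (w xm) + -(r * ‖θ‖) := fun θ => by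
    obtain ⟨x, hx, hle⟩ := exists_le_inner_of_closedBall_subset_convexHull hr.le hball θ
    have hlog := log_weight_add_inner_le_log_partition hw hx θ
    have hmin := hxm x hx
    unfold logLikelihood
    linarith
  refine tendsto_atBot_mono hbound (tendsto_atBot_add_const_left _ _ ?_)
  exact tendsto_neg_atTop_atBot.comp (tendsto_norm_cocompact_atTop.const_mul_atTop hr)

lemma exists_isMaxOn_logLikelihood [ProperSpace E] (hF : F.Nonempty) (hw : ∀ x ∈ F, 0 < w x)
    {xs : E} (hxs : xs ∈ interior (convexHull ℝ (F : Set E))) :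
    ∃ θ, IsMaxOn (logLikelihood F w xs) Set.univ θ :=
  let ⟨θ, hθ⟩ := (continuous_logLikelihood hF hw xs).exists_forall_ge
    (tendsto_logLikelihood_cocompact hF hw hxs)
  ⟨θ, fun η _ => hθ η⟩

lemma mean_eq_of_isLocalMax (hF : F.Nonempty) (hw : ∀ x ∈ F, 0 < w x) {xs θ : E}
    (hθ : IsLocalMax (logLikelihood F w xs) θ) : mean F w θ = xs := by
  have hgrad := hθ.hasFDerivAt_eq_zero (hasFDerivAt_logLikelihood hF hw xs θ)
  rw [← norm_eq_zero, innerSL_apply_norm, norm_eq_zero, sub_eq_zero] at hgrad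
  exact hgrad.symm

end ExponentialFamily

/-- MLE existence for ERGMs: if the observed statistic `x*` lies in the interior
of the convex hull of the finite feature set `F ⊂ ℝ^d` (with positive weights
`w`), then the log-likelihood `ℓ(θ) = ⟪θ, x*⟫ − log Σ_{x∈F} w(x) exp⟪θ, x⟫`
attains its supremum at some `θ̂`, which moreover satisfies the mean-matching
condition `Σ_{x∈F} P(x|θ̂) x = x*`. -/
theorem ergm_mle_exists (d : ℕ)
    (F : Finset (EuclideanSpace ℝ (Fin d))) (hF : F.Nonempty)
    (w : EuclideanSpace ℝ (Fin d) → ℝ) (hw : ∀ x ∈ F, 0 < w x)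
    (xs : EuclideanSpace ℝ (Fin d))
    (hxs : xs ∈ interior (convexHull ℝ (F : Set (EuclideanSpace ℝ (Fin d))))) :
    ∃ θhat : EuclideanSpace ℝ (Fin d),
      IsMaxOn (fun θ : EuclideanSpace ℝ (Fin d) =>
        ⟪θ, xs⟫ - Real.log (∑ x ∈ F, w x * Real.exp ⟪θ, x⟫)) Set.univ θhat ∧
      (∑ x ∈ F, (w x * Real.exp ⟪θhat, x⟫ /
          ∑ y ∈ F, w y * Real.exp ⟪θhat, y⟫) • x) = xs := by
  obtain ⟨θhat, hmax⟩ := ExponentialFamily.exists_isMaxOn_logLikelihood hF hw hxs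
  exact ⟨θhat, hmax,
    ExponentialFamily.mean_eq_of_isLocalMax hF hw (hmax.isLocalMax Filter.univ_mem)⟩
end
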